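/- For T > 0, s ∈ ℕ with s ≥ 1, and a > 0: the Lebesgue volume I(s,T,a) of P(s,T,a) := {x ∈ [0,∞)^s : ∏_{j=1}^s(x_j + a) ≤ T} equals 0 if T ≤ a^s, and equals T · F_s(ln T - s ln a) if T > a^s, where F_s(t) = (-1)^s ∑_{n=s}^∞ (-t)^n/n!. -/

import Mathlib

/-!
Slicing along the first coordinate gives
`vol P(s+1,T,a) = ∫_{x ≥ 0} vol P(s, T/(x+a), a) dx`, and the slice is empty as soon as
`T/(x+a) < a^s`, i.e. `x > T/a^s - a`. Since `F_{s+1}' = F_s` and `F_{s+1}(0) = 0`, the map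
`x ↦ -T F_{s+1}(ln(T/(x+a)) - s ln a)` is a primitive of the slice volume
`x ↦ T/(x+a) · F_s(ln(T/(x+a)) - s ln a)` and vanishes at `x = T/a^s - a`, so the formula
propagates by induction on `s`, starting from `s = 0` where `P(0,T,a)` is the one-point space for
`T ≥ 1`. When `T ≤ a^s` with `s ≥ 1`, the slice integral runs over an empty interval.
-/

open MeasureTheory

/-- The corner smooth hyperbolic cross `P(s,T,a) = {x ∈ [0,∞)^s : ∏ (x_j + a) ≤ T}`. -/
def hcP (s : ℕ) (T a : ℝ) : Set (Fin s → ℝ) :=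
  {x | (∀ i, 0 ≤ x i) ∧ ∏ i, (x i + a) ≤ T}

/-- `F_s(t) = (-1)^s ∑_{k=s}^∞ (-t)^k/k!`, the signed `s`-th Taylor remainder of `exp (-t)`. -/
noncomputable def taylorF (s : ℕ) (t : ℝ) : ℝ :=
  (-1 : ℝ) ^ s * ∑' k : ℕ, (-t) ^ (k + s) / (Nat.factorial (k + s) : ℝ)

open Real Set

theorem taylorF_eq (s : ℕ) (t : ℝ) :
    taylorF s t = (-1) ^ s * (exp (-t) - ∑ n ∈ Finset.range s, (-t) ^ n / n.factorial) := by
  have h := (summable_pow_div_factorial (-t)).sum_add_tsum_nat_add s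
  rw [taylorF, exp_eq_exp_ℝ, congrFun NormedSpace.exp_eq_tsum_div, ← h, add_sub_cancel_left]

theorem taylorF_zero_left (t : ℝ) : taylorF 0 t = exp (-t) := by
  simp [taylorF_eq]

theorem taylorF_succ (s : ℕ) (t : ℝ) :
    taylorF (s + 1) t = t ^ s / s.factorial - taylorF s t := by
  have hsign : (-1 : ℝ) ^ s * (-t) ^ s = t ^ s := by rw [← mul_pow]; simp
  rw [taylorF_eq, taylorF_eq, Finset.sum_range_succ, pow_succ, ← hsign]
  ring

theorem taylorF_succ_zero_right (s : ℕ) : taylorF (s + 1) 0 = 0 := by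
  simp [taylorF]

theorem continuous_taylorF (s : ℕ) : Continuous (taylorF s) := by
  simp_rw [funext (taylorF_eq s)]
  fun_prop

theorem hasDerivAt_pow_div_factorial (n : ℕ) (t : ℝ) :
    HasDerivAt (fun t : ℝ => t ^ (n + 1) / (n + 1).factorial) (t ^ n / n.factorial) t := by
  refine ((hasDerivAt_pow (n + 1) t).div_const _).congr_deriv ?_
  rw [Nat.factorial_succ]
  push_cast
  field_simp

theorem hasDerivAt_taylorF_succ (s : ℕ) (t : ℝ) :
    HasDerivAt (taylorF (s + 1)) (taylorF s t) t := by
  induction s generalizing t with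
  | zero =>
    simp_rw [funext (taylorF_succ 0), taylorF_zero_left]
    simpa using ((hasDerivAt_neg t).exp).const_sub 1
  | succ s ih =>
    rw [funext (taylorF_succ (s + 1)), taylorF_succ]
    exact (hasDerivAt_pow_div_factorial s t).sub (ih t)

theorem taylorF_succ_eq_integral (s : ℕ) (t : ℝ) :
    taylorF (s + 1) t = ∫ u in 0..t, taylorF s u := by
  rw [intervalIntegral.integral_eq_sub_of_hasDerivAt (fun u _ => hasDerivAt_taylorF_succ s u)
    ((continuous_taylorF s).intervalIntegrable 0 t), taylorF_succ_zero_right, sub_zero]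

theorem taylorF_nonneg (s : ℕ) {t : ℝ} (ht : 0 ≤ t) : 0 ≤ taylorF s t := by
  induction s generalizing t with
  | zero => rw [taylorF_zero_left]; positivity
  | succ s ih =>
    rw [taylorF_succ_eq_integral]
    exact intervalIntegral.integral_nonneg ht fun u hu => ih hu.1

theorem measurableSet_hcP (s : ℕ) (T a : ℝ) : MeasurableSet (hcP s T a) := by
  have hP : hcP s T a = (⋂ i, {x | 0 ≤ x i}) ∩ {x | ∏ i, (x i + a) ≤ T} := by
    ext; simp [hcP]
  rw [hP]
  exact (MeasurableSet.iInter fun i => measurableSet_le measurable_const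
    (measurable_pi_apply i)).inter (measurableSet_le (by fun_prop) measurable_const)

theorem hcP_eq_empty_of_lt_pow {s : ℕ} {T a : ℝ} (ha : 0 ≤ a) (hT : T < a ^ s) :
    hcP s T a = ∅ := by
  refine Set.eq_empty_of_forall_notMem fun x ⟨hx, hprod⟩ => hT.not_ge ?_
  calc a ^ s = ∏ _i : Fin s, a := by simp
    _ ≤ ∏ i, (x i + a) := Finset.prod_le_prod (fun _ _ => ha) fun i _ => by linarith [hx i]
    _ ≤ T := hprod

theorem hcP_zero_eq_univ {T : ℝ} (a : ℝ) (hT : 1 ≤ T) : hcP 0 T a = univ := by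
  ext x
  simp [hcP, hT]

theorem cons_mem_hcP_iff {s : ℕ} {T a x : ℝ} {y : Fin s → ℝ} (ha : 0 < a) :
    (Fin.cons x y : Fin (s + 1) → ℝ) ∈ hcP (s + 1) T a ↔
      0 ≤ x ∧ y ∈ hcP s (T / (x + a)) a := by
  simp only [hcP, mem_ofPred_eq, Fin.forall_fin_succ, Fin.prod_univ_succ, Fin.cons_zero,
    Fin.cons_succ]
  constructor
  · rintro ⟨⟨hx, hy⟩, hprod⟩
    exact ⟨hx, hy, (le_div_iff₀' (by linarith)).2 hprod⟩
  · rintro ⟨hx, hy, hprod⟩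
    exact ⟨⟨hx, hy⟩, (le_div_iff₀' (by linarith)).1 hprod⟩

theorem volume_hcP_succ {s : ℕ} {a : ℝ} (ha : 0 < a) (T : ℝ) :
    volume (hcP (s + 1) T a) = ∫⁻ x in Ici 0, volume (hcP s (T / (x + a)) a) := by
  let e := MeasurableEquiv.piFinSuccAbove (fun _ : Fin (s + 1) => ℝ) 0
  have hslice (x : ℝ) : volume (Prod.mk x ⁻¹' (e.symm ⁻¹' hcP (s + 1) T a)) =
      (Ici 0).indicator (fun x => volume (hcP s (T / (x + a)) a)) x := by
    have hmem : Prod.mk x ⁻¹' (e.symm ⁻¹' hcP (s + 1) T a) =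
        {y | 0 ≤ x ∧ y ∈ hcP s (T / (x + a)) a} := by
      ext y
      simp [e, MeasurableEquiv.piFinSuccAbove_symm_apply, Fin.insertNthEquiv,
        Fin.insertNth_zero', cons_mem_hcP_iff ha]
    by_cases hx : 0 ≤ x <;> simp [hmem, hx]
  have hm := measurableSet_hcP (s + 1) T a
  rw [← (volume_preserving_piFinSuccAbove (fun _ : Fin (s + 1) => ℝ) 0).symm.measure_preimage
    hm.nullMeasurableSet, Measure.volume_eq_prod, Measure.prod_apply (e.symm.measurable hm),
    ← lintegral_indicator measurableSet_Ici]
  exact lintegral_congr hslice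

theorem volume_hcP_succ_eq_setLIntegral_Ioo {s : ℕ} {a : ℝ} (ha : 0 < a) (T : ℝ) :
    volume (hcP (s + 1) T a) =
      ∫⁻ x in Ioo 0 (T / a ^ s - a), volume (hcP s (T / (x + a)) a) := by
  have has : 0 < a ^ s := pow_pos ha s
  rw [volume_hcP_succ ha, ← lintegral_indicator measurableSet_Ici,
    ← lintegral_indicator measurableSet_Ioo]
  refine lintegral_congr_ae ?_
  filter_upwards [Measure.ae_ne volume 0, Measure.ae_ne volume (T / a ^ s - a)] with x hx0 hxc
  rcases lt_or_gt_of_ne hx0 with hneg | hpos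
  · simp [hneg.not_ge, hneg.not_gt]
  rcases lt_or_gt_of_ne hxc with hlt | hgt
  · simp [hpos.le, hpos, hlt]
  · have hT : T / (x + a) < a ^ s := by
      rw [div_lt_iff₀ (by linarith), ← div_lt_iff₀' has]
      linarith
    simp [hpos.le, hgt.not_gt, hcP_eq_empty_of_lt_pow ha.le hT]

theorem hasDerivAt_taylorF_succ_log_div {s : ℕ} {T a x : ℝ} (C : ℝ) (hT : T ≠ 0)
    (hx : 0 < x + a) :
    HasDerivAt (fun x => -T * taylorF (s + 1) (log (T / (x + a)) - C))
      (T / (x + a) * taylorF s (log (T / (x + a)) - C)) x := by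
  have hlog : HasDerivAt (fun x => log (T / (x + a)) - C) (-(x + a)⁻¹) x := by
    have h := ((hasDerivAt_const x T).div ((hasDerivAt_id' x).add_const a) hx.ne').log
      (div_ne_zero hT hx.ne')
    refine (h.sub_const C).congr_deriv ?_
    simp only [Pi.div_apply]
    field_simp
    ring
  refine (((hasDerivAt_taylorF_succ s _).comp x hlog).const_mul (-T)).congr_deriv ?_
  field_simp

theorem volume_hcP_of_pow_lt {a : ℝ} (ha : 0 < a) (s : ℕ) {T : ℝ} (hT : a ^ s < T) :
    volume (hcP s T a) = ENNReal.ofReal (T * taylorF s (log T - s * log a)) := by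
  induction s generalizing T with
  | zero =>
    rw [pow_zero] at hT
    have hT0 : 0 < T := one_pos.trans hT
    rw [hcP_zero_eq_univ a hT.le, volume_pi, Measure.pi_univ, Finset.univ_eq_empty,
      Finset.prod_empty, taylorF_zero_left, CharP.cast_eq_zero, zero_mul, sub_zero, exp_neg,
      exp_log hT0, mul_inv_cancel₀ hT0.ne', ENNReal.ofReal_one]
  | succ s ih =>
    have has : 0 < a ^ s := pow_pos ha s
    have hT0 : 0 < T := (pow_pos ha _).trans hT
    set c := T / a ^ s - a with hc_def
    have hc : 0 < c := by
      rw [sub_pos, lt_div_iff₀ has, ← pow_succ']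
      exact hT
    have hxa {x : ℝ} (hx : 0 ≤ x) : 0 < x + a := by linarith
    have hlt {x : ℝ} (hx : 0 ≤ x) : a ^ s < T / (x + a) ↔ x < c := by
      rw [lt_div_iff₀ (hxa hx), ← lt_div_iff₀' has, hc_def, lt_sub_iff_add_lt]
    have hle {x : ℝ} (hx : 0 ≤ x) : a ^ s ≤ T / (x + a) ↔ x ≤ c := by
      rw [le_div_iff₀ (hxa hx), ← le_div_iff₀' has, hc_def, le_sub_iff_add_le]
    set g := fun x => T / (x + a) * taylorF s (log (T / (x + a)) - s * log a)
    set G := fun x => -T * taylorF (s + 1) (log (T / (x + a)) - s * log a)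
    have hG (x : ℝ) (hx : x ∈ Icc 0 c) : HasDerivAt G (g x) x :=
      hasDerivAt_taylorF_succ_log_div _ hT0.ne' (hxa hx.1)
    have hg (x : ℝ) (hx : x ∈ Icc 0 c) : 0 ≤ g x := by
      have hTx := div_pos hT0 (hxa hx.1)
      exact mul_nonneg hTx.le (taylorF_nonneg s (sub_nonneg.2
        ((pow_le_iff_le_log ha hTx).1 ((hle hx.1).2 hx.2))))
    have hint : IntegrableOn g (Ioc 0 c) :=
      intervalIntegral.integrableOn_deriv_of_nonneg
        (fun x hx => (hG x hx).continuousAt.continuousWithinAt)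
        (fun x hx => hG x (Ioo_subset_Icc_self hx)) (fun x hx => hg x (Ioo_subset_Icc_self hx))
    calc volume (hcP (s + 1) T a)
        = ∫⁻ x in Ioo 0 c, volume (hcP s (T / (x + a)) a) :=
          volume_hcP_succ_eq_setLIntegral_Ioo ha T
      _ = ∫⁻ x in Ioo 0 c, ENNReal.ofReal (g x) :=
          setLIntegral_congr_fun measurableSet_Ioo fun x hx => ih ((hlt hx.1.le).2 hx.2)
      _ = ENNReal.ofReal (∫ x in Ioo 0 c, g x) :=
          (ofReal_integral_eq_lintegral_ofReal (hint.mono_set Ioo_subset_Ioc_self)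
            (ae_restrict_of_forall_mem measurableSet_Ioo fun x hx =>
              hg x (Ioo_subset_Icc_self hx))).symm
      _ = ENNReal.ofReal (G c - G 0) := by
          rw [← integral_Ioc_eq_integral_Ioo, ← intervalIntegral.integral_of_le hc.le,
            intervalIntegral.integral_eq_sub_of_hasDerivAt
              (fun x hx => hG x (by rwa [uIcc_of_le hc.le] at hx))
              ((intervalIntegrable_iff_integrableOn_Ioc_of_le hc.le).2 hint)]
      _ = ENNReal.ofReal (T * taylorF (s + 1) (log T - (s + 1 : ℕ) * log a)) := by
          have hGc : T / (c + a) = a ^ s := by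
            rw [hc_def, sub_add_cancel, div_div_cancel₀ hT0.ne']
          simp only [G, hGc, log_pow, sub_self, taylorF_succ_zero_right, zero_add,
            log_div hT0.ne' ha.ne']
          push_cast
          ring_nf

theorem volume_hcP_formula_general (s : ℕ) (hs : 1 ≤ s) (T a : ℝ) (ha : 0 < a) :
    (T ≤ a ^ s → (volume (hcP s T a)).toReal = 0) ∧
    (a ^ s < T →
      (volume (hcP s T a)).toReal = T * taylorF s (Real.log T - s * Real.log a)) := by
  constructor
  · intro h
    obtain ⟨n, rfl⟩ : ∃ n, s = n + 1 := ⟨s - 1, by omega⟩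
    have hc : T / a ^ n - a ≤ 0 := by
      rw [sub_nonpos, div_le_iff₀ (pow_pos ha n), ← pow_succ']
      exact h
    rw [volume_hcP_succ_eq_setLIntegral_Ioo ha, Ioo_eq_empty hc.not_gt, Measure.restrict_empty,
      lintegral_zero_measure, ENNReal.toReal_zero]
  · intro h
    have hT : 0 < T := (pow_pos ha s).trans h
    rw [volume_hcP_of_pow_lt ha s h, ENNReal.toReal_ofReal]
    exact mul_nonneg hT.le
      (taylorF_nonneg s (sub_nonneg.2 ((pow_le_iff_le_log ha hT).1 h.le)))

/-- the volume `I(s,T,a)` of `P(s,T,a)` is `0` if `T ≤ a^s`, and equals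
`T · F_s(ln T − s ln a)` if `T > a^s`. -/
theorem volume_hcP_formula (s : ℕ) (hs : 1 ≤ s) (T a : ℝ) (hT : 0 < T) (ha : 0 < a) :
    (T ≤ a ^ s → (volume (hcP s T a)).toReal = 0) ∧
    (a ^ s < T →
      (volume (hcP s T a)).toReal = T * taylorF s (Real.log T - s * Real.log a)) :=
  volume_hcP_formula_general s hs T a ha
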